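/- Let Y ⊆ ℝⁿ be nonempty, Ψ : Y → I(ℝ) an interval-valued function, and u ∈ Y. If (0̂, 0) ∈ ∂ʷΨ(u) ⊕ N^c_Y(u) — i.e., there exist (Ĝ, c) ∈ ∂ʷΨ(u) and (Ĥ, c') ∈ N^c_Y(u) with Ĝ ⊕ Ĥ = 0̂ and c + c' = 0, where 0̂ ∈ I(ℝ)ⁿ is the interval vector all of whose components are [0,0] — then u is a weak efficient point of Ψ on Y. -/

import Mathlib

/-! The two constants are nonnegative with sum `0`, so both vanish. Two proper intervals summing
to `[0, 0]` must be degenerate, so `G i = [g i, g i]` and `H i = [-g i, -g i]`, and both products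
collapse to points: `Ĝ⊤⊙(y - u) = [s, s]` and `Ĥ⊤⊙(y - u) = [-s, -s]` with `s = g ⬝ (y - u)`.
The normal-cone inequality says `0 ≤ s`, and the subgradient inequality
`[s, s] ⪯ Ψ y ⊖_gH Ψ u` then gives `Ψ u ⪯ Ψ y`. -/

/-- A compact real interval `[lo, hi]` with `lo ≤ hi`. -/
structure IInt where
  lo : ℝ
  hi : ℝ
  isLe : lo ≤ hi

namespace IInt

/-- Dominance order on intervals: `[a,b] ⪯ [c,d]` iff `a ≤ c` and `b ≤ d`. -/
def ile (X Y : IInt) : Prop := X.lo ≤ Y.lo ∧ X.hi ≤ Y.hi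

/-- Interval addition `⊕`. -/
def add (X Y : IInt) : IInt := ⟨X.lo + Y.lo, X.hi + Y.hi, add_le_add X.isLe Y.isLe⟩

/-- gH-difference `⊖_gH`. -/
def gH (X Y : IInt) : IInt :=
  ⟨min (X.lo - Y.lo) (X.hi - Y.hi), max (X.lo - Y.lo) (X.hi - Y.hi), min_le_max⟩

/-- Scalar multiplication `λ ⊙ [a,b]`：`[λa, λb]` for `λ ≥ 0` and `[λb, λa]` for `λ < 0`. -/
def smul (l : ℝ) (X : IInt) : IInt :=
  ⟨min (l * X.lo) (l * X.hi), max (l * X.lo) (l * X.hi), min_le_max⟩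

/-- Inclusion of intervals: `[a,b] ⊆ [c,d]` iff `c ≤ a` and `b ≤ d`. -/
def subset (X Y : IInt) : Prop := Y.lo ≤ X.lo ∧ X.hi ≤ Y.hi

/-- Norm on `I(ℝ)`: `‖[a,b]‖ = max |a| |b|`. -/
def inorm (X : IInt) : ℝ := max |X.lo| |X.hi|

/-- The degenerate interval `[r, r]`. -/
def ofReal (r : ℝ) : IInt := ⟨r, r, le_refl r⟩

/-- Width of an interval. -/
def width (X : IInt) : ℝ := X.hi - X.lo

end IInt

/-- The product `Ĝ⊤ ⊙ d` of an interval vector and a real vector. -/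
def iprod {n : ℕ} (G : Fin n → IInt) (d : EuclideanSpace ℝ (Fin n)) : IInt :=
  ⟨∑ i, min (d i * (G i).lo) (d i * (G i).hi),
   ∑ i, max (d i * (G i).lo) (d i * (G i).hi),
   Finset.sum_le_sum fun _ _ => min_le_max⟩

/-- `(Ĝ, c)` is a gH-weak subgradient of `Φ` at `u` relative to `Y`. -/
def IsWeakSubgrad {n : ℕ} (Y : Set (EuclideanSpace ℝ (Fin n)))
    (Φ : EuclideanSpace ℝ (Fin n) → IInt) (u : EuclideanSpace ℝ (Fin n))
    (G : Fin n → IInt) (c : ℝ) : Prop :=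
  0 ≤ c ∧ ∀ y ∈ Y,
    IInt.ile (IInt.gH (iprod G (y - u)) (IInt.ofReal (c * ‖y - u‖))) (IInt.gH (Φ y) (Φ u))

/-- `(Ĥ, c')` belongs to the augmented normal cone to `Y` at `u`. -/
def InAugNormalCone {n : ℕ} (Y : Set (EuclideanSpace ℝ (Fin n)))
    (u : EuclideanSpace ℝ (Fin n)) (H : Fin n → IInt) (c' : ℝ) : Prop :=
  0 ≤ c' ∧ ∀ y ∈ Y,
    IInt.ile (IInt.gH (iprod H (y - u)) (IInt.ofReal (c' * ‖y - u‖))) (IInt.ofReal 0)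

namespace IInt

theorem ext {X Y : IInt} (hlo : X.lo = Y.lo) (hhi : X.hi = Y.hi) : X = Y := by
  cases X; cases Y; simp_all

theorem ofReal_ile_ofReal {a b : ℝ} : ile (ofReal a) (ofReal b) ↔ a ≤ b :=
  and_self_iff

theorem gH_ofReal_ofReal (a b : ℝ) : gH (ofReal a) (ofReal b) = ofReal (a - b) :=
  ext (min_self _) (max_self _)

theorem eq_ofReal_of_add_eq_ofReal_zero {X Y : IInt} (h : add X Y = ofReal 0) :
    X = ofReal X.lo ∧ Y = ofReal (-X.lo) := by
  have hlo : X.lo + Y.lo = 0 := congrArg lo h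
  have hhi : X.hi + Y.hi = 0 := congrArg hi h
  have hX := X.isLe
  have hY := Y.isLe
  exact ⟨ext rfl (by simp only [ofReal]; linarith), ext (by simp only [ofReal]; linarith)
    (by simp only [ofReal]; linarith)⟩

theorem ile_of_ofReal_ile_gH {X Y : IInt} {a : ℝ} (ha : 0 ≤ a) (h : ile (ofReal a) (gH X Y)) :
    ile Y X := by
  obtain ⟨hlo, hhi⟩ : a ≤ X.lo - Y.lo ∧ a ≤ X.hi - Y.hi := le_min_iff.mp h.1
  exact ⟨by linarith, by linarith⟩

end IInt

theorem iprod_ofReal {n : ℕ} (a : Fin n → ℝ) (d : EuclideanSpace ℝ (Fin n)) :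
    iprod (fun i => IInt.ofReal (a i)) d = IInt.ofReal (∑ i, d i * a i) :=
  IInt.ext (by simp only [iprod, IInt.ofReal, min_self])
    (by simp only [iprod, IInt.ofReal, max_self])

theorem stmt_19_general {n : ℕ} (Y : Set (EuclideanSpace ℝ (Fin n)))
    (Ψ : EuclideanSpace ℝ (Fin n) → IInt) (u : EuclideanSpace ℝ (Fin n))
    (h : ∃ (G H : Fin n → IInt) (c c' : ℝ), IsWeakSubgrad Y Ψ u G c ∧
      InAugNormalCone Y u H c' ∧
      (∀ i, IInt.add (G i) (H i) = IInt.ofReal 0) ∧ c + c' = 0) :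
    ∀ y ∈ Y, IInt.ile (Ψ u) (Ψ y) := by
  intro y hy
  obtain ⟨G, H, c, c', ⟨hc, hG⟩, ⟨hc', hH⟩, hGH, hcc⟩ := h
  obtain rfl : c = 0 := by linarith
  obtain rfl : c' = 0 := by linarith
  choose hG_deg hH_neg using fun i => IInt.eq_ofReal_of_add_eq_ofReal_zero (hGH i)
  set s := ∑ i, (y - u) i * (G i).lo
  have hs : 0 ≤ s := by
    have hHy := hH y hy
    rw [funext hH_neg, iprod_ofReal, zero_mul, IInt.gH_ofReal_ofReal,
      IInt.ofReal_ile_ofReal] at hHy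
    simpa only [mul_neg, Finset.sum_neg_distrib, sub_zero, neg_nonpos] using hHy
  have hGy := hG y hy
  rw [funext hG_deg, iprod_ofReal, zero_mul, IInt.gH_ofReal_ofReal, sub_zero] at hGy
  exact IInt.ile_of_ofReal_ile_gH hs hGy

/-- if `(0̂, 0) ∈ ∂ʷΨ(u) ⊕ N^c_Y(u)`, then `u` is a weak efficient point of
`Ψ` on `Y`. -/
theorem stmt_19 {n : ℕ} (Y : Set (EuclideanSpace ℝ (Fin n))) (hY : Y.Nonempty)
    (Ψ : EuclideanSpace ℝ (Fin n) → IInt) (u : EuclideanSpace ℝ (Fin n)) (hu : u ∈ Y)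
    (h : ∃ (G H : Fin n → IInt) (c c' : ℝ), IsWeakSubgrad Y Ψ u G c ∧
      InAugNormalCone Y u H c' ∧
      (∀ i, IInt.add (G i) (H i) = IInt.ofReal 0) ∧ c + c' = 0) :
    ∀ y ∈ Y, IInt.ile (Ψ u) (Ψ y) :=
  stmt_19_general Y Ψ u h
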